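/- For all u, v ∈ kX_∞, the coproduct satisfies Δ(u⋄v) = Δ(u)⋄Δ(v); that is, Δ is a homomorphism of k-algebras from (kX_∞, ⋄) to (kX_∞ ⊗ kX_∞, ⋄⊗⋄). -/

import Mathlib

/-!
Both `⋄` and `Δ` act at the junction of two words, so everything is proved on basis words by
strong induction on the total degree; since products never raise the degree, the induction
hypothesis applies to every word occurring in a product of lower degree.

First `⋄` is associative. If one of the two junctions of `u ⋄ v ⋄ w` is a plain
concatenation, both sides are computed directly; a longer middle word is split after its first
letter; and for `⌊a⌋ ⋄ ⌊b⌋ ⋄ ⌊c⌋` the question moves inside the bracket, to the associativity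
of `x ⋆ y = P(x) ⋄ y + x ⋄ P(y) + λ x ⋄ y` on lower-degree words.

Then, splitting off the first letter of `u` and using associativity of `⋄` and of `⋄ ⊗ ⋄`,
`Δ(u ⋄ v) = Δ(u) ⋄ Δ(v)` reduces to a single letter `u`. If `u v` is a concatenation this is the
factorization rule for `Δ`; the remaining case `⌊a⌋ ⋄ ⌊b⌋` holds because
`Δ⌊w⌋ = ⌊w⌋ ⊗ 1 + (id ⊗ P) Δ(w)` and `id ⊗ P` is a Rota-Baxter operator of weight `λ`
for `⋄ ⊗ ⋄`.
-/

open TensorProduct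

universe u v

/-- Letters of Rota-Baxter bracketed words: either a variable from `X` or a
bracketed word `⌊w⌋` (a list of letters). -/
inductive RBL (X : Type u) : Type u
  | var : X → RBL X
  | br : List (RBL X) → RBL X

namespace RBL

variable {X : Type u}

/-- `a.isBr = true` iff the letter `a` is a bracketed element `⌊w⌋ ∈ ⌊X_∞⌋`. -/
def isBr : RBL X → Bool
  | var _ => false
  | br _ => true

mutual
  /-- Validity of a letter: the inside of a bracket must be a Rota-Baxter bracketed word. -/
  def valid : RBL X → Prop
    | var _ => True
    | br l => wordValid l
  /-- `wordValid l` says that the list of letters `l` is a Rota-Baxter bracketed word,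
  i.e. all letters are valid and the letters alternate (no two consecutive brackets). -/
  def wordValid : List (RBL X) → Prop
    | [] => True
    | [a] => valid a
    | a :: b :: l => valid a ∧ ¬(a.isBr = true ∧ b.isBr = true) ∧ wordValid (b :: l)
end

lemma wordValid_nil : wordValid ([] : List (RBL X)) := by simp [wordValid]

lemma wordValid_var (x : X) : wordValid [var x] := by simp [wordValid, valid]

lemma wordValid_br {l : List (RBL X)} (h : wordValid l) : wordValid [br l] := by
  simpa [wordValid, valid] using h

mutual
  /-- The total degree of a letter. -/
  def degL : RBL X → ℕ
    | var _ => 1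
    | br l => degW l + 1
  /-- The total degree of a word: the number of occurrences of brackets (i.e. of `P`)
  plus the number of occurrences of letters of `X`. -/
  def degW : List (RBL X) → ℕ
    | [] => 0
    | a :: l => degL a + degW l
end

end RBL

/-- The set `X_∞` of Rota-Baxter bracketed words on `X`. -/
def RBWord (X : Type u) : Type u := {l : List (RBL X) // RBL.wordValid l}

namespace RBWord

variable {X : Type u}

/-- The empty word `1`. -/
def one : RBWord X := ⟨[], RBL.wordValid_nil⟩

/-- The total degree of a Rota-Baxter bracketed word. -/
def deg (w : RBWord X) : ℕ := RBL.degW w.1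

end RBWord

variable (k : Type v) [CommRing k] (X : Type u)

/-- The free `k`-module `kX_∞` on the Rota-Baxter bracketed words. -/
abbrev RBMod : Type max u v := RBWord X →₀ k

variable {X}

/-- A Rota-Baxter bracketed word viewed as a basis element of `kX_∞`. -/
noncomputable def sing (w : RBWord X) : RBMod k X := Finsupp.single w 1

variable (X)

/-- The Rota-Baxter operator `P` on `kX_∞`, sending a basis word `w` to `⌊w⌋`. -/
noncomputable def Pop : RBMod k X →ₗ[k] RBMod k X :=
  Finsupp.lmapDomain k k fun w => (⟨[RBL.br w.1], RBL.wordValid_br w.2⟩ : RBWord X)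

/-- Concatenation on the left by `u₀` and on the right by `v₀`, as a linear map on `kX_∞`
(sending basis words whose concatenation is not valid to `0`; in all uses below
the concatenations are valid). -/
noncomputable def concatLR (u₀ v₀ : List (RBL X)) : RBMod k X →ₗ[k] RBMod k X :=
  Finsupp.lsum k fun w =>
    letI := Classical.dec (RBL.wordValid (u₀ ++ w.1 ++ v₀))
    if h : RBL.wordValid (u₀ ++ w.1 ++ v₀) then
      Finsupp.lsingle (⟨u₀ ++ w.1 ++ v₀, h⟩ : RBWord X) else 0

/-- The counit `ε : kX_∞ → k`, `ε(1) = 1` and `ε(w) = 0` for basis words `w ≠ 1`. -/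
noncomputable def eps : RBMod k X →ₗ[k] k := Finsupp.lapply RBWord.one

/-- The homogeneous component `H^(n)` of `kX_∞`: the span of the basis words of total
degree `n`. -/
noncomputable def Hdeg (n : ℕ) : Submodule k (RBMod k X) :=
  Finsupp.supported k k {w : RBWord X | w.deg = n}

variable (lam : k)

/-- The data of the product `⋄` on the free Rota-Baxter algebra `kX_∞` of weight `lam`,
together with its recursive defining equations:
* if the concatenation of `u` and `v` is again a Rota-Baxter bracketed word (in particular
  if `u` or `v` is empty, or if the last letter of `u` or the first letter of `v` is a
  variable), then `u ⋄ v` is the concatenation `uv`;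
* if `u = u₀⌊ā⌋` and `v = ⌊b̄⌋v₀`, then
  `u ⋄ v = u₀(⌊⌊ā⌋ ⋄ b̄⌋ + ⌊ā ⋄ ⌊b̄⌋⌋ + λ⌊ā ⋄ b̄⌋)v₀`. -/
structure FreeRBAData where
  /-- the product `⋄`, as a `k`-bilinear map -/
  d : RBMod k X →ₗ[k] RBMod k X →ₗ[k] RBMod k X
  d_concat : ∀ (u v : RBWord X) (h : RBL.wordValid (u.1 ++ v.1)),
    d (sing k u) (sing k v) = sing k ⟨u.1 ++ v.1, h⟩
  d_br : ∀ (u₀ v₀ : List (RBL X)) (a b : RBWord X)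
    (hu : RBL.wordValid (u₀ ++ [RBL.br a.1])) (hv : RBL.wordValid (RBL.br b.1 :: v₀)),
    d (sing k ⟨u₀ ++ [RBL.br a.1], hu⟩) (sing k ⟨RBL.br b.1 :: v₀, hv⟩)
      = concatLR k X u₀ v₀
          (Pop k X (d (Pop k X (sing k a)) (sing k b))
            + Pop k X (d (sing k a) (Pop k X (sing k b)))
            + lam • Pop k X (d (sing k a) (sing k b)))

namespace FreeRBAData

variable {k X lam}

/-- The componentwise product `⋄ ⊗ ⋄` on `kX_∞ ⊗ kX_∞`. -/
noncomputable def mulT (D : FreeRBAData k X lam) :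
    (RBMod k X ⊗[k] RBMod k X) →ₗ[k] (RBMod k X ⊗[k] RBMod k X) →ₗ[k]
      (RBMod k X ⊗[k] RBMod k X) :=
  TensorProduct.map₂ D.d D.d

end FreeRBAData

/-- The free Rota-Baxter algebra `kX_∞` of weight `lam` together with the coproduct `Δ`,
characterized by its recursive defining equations:
`Δ(1) = 1 ⊗ 1`, `Δ(x) = x ⊗ 1 + 1 ⊗ x` for `x ∈ X`,
`Δ(⌊w⌋) = ⌊w⌋ ⊗ 1 + (id ⊗ P)Δ(w)`, and
`Δ(w₁ ⋄ ⋯ ⋄ w_m) = Δ(w₁) ⋄ ⋯ ⋄ Δ(w_m)` for the `⋄`-factorization of a word into its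
(alternating) sequence of letters. -/
structure FreeRBBialgData extends FreeRBAData k X lam where
  /-- the coproduct `Δ` -/
  Dl : RBMod k X →ₗ[k] (RBMod k X ⊗[k] RBMod k X)
  Dl_one : Dl (sing k RBWord.one) = sing k RBWord.one ⊗ₜ[k] sing k RBWord.one
  Dl_var : ∀ (x : X),
    Dl (sing k ⟨[RBL.var x], RBL.wordValid_var x⟩)
      = sing k ⟨[RBL.var x], RBL.wordValid_var x⟩ ⊗ₜ[k] sing k RBWord.one
        + sing k RBWord.one ⊗ₜ[k] sing k ⟨[RBL.var x], RBL.wordValid_var x⟩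
  Dl_br : ∀ w : RBWord X,
    Dl (Pop k X (sing k w))
      = Pop k X (sing k w) ⊗ₜ[k] sing k RBWord.one
        + TensorProduct.map LinearMap.id (Pop k X) (Dl (sing k w))
  Dl_cons : ∀ (a : RBL X) (l : List (RBL X)) (h : RBL.wordValid (a :: l))
    (ha : RBL.wordValid [a]) (hl : RBL.wordValid l), l ≠ [] →
    Dl (sing k ⟨a :: l, h⟩)
      = TensorProduct.map₂ d d (Dl (sing k ⟨[a], ha⟩)) (Dl (sing k ⟨l, hl⟩))

namespace RBL

variable {X : Type u}

lemma wordValid_map_var (s : List X) : wordValid (s.map RBL.var) := by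
  induction s with
  | nil => exact wordValid_nil
  | cons a t ih =>
    cases t with
    | nil => exact wordValid_var a
    | cons b t' =>
      simp only [List.map_cons] at ih ⊢
      exact ⟨by simp [valid], by simp [isBr], ih⟩

end RBL

variable {X}

/-- The word `x₁ ⋯ x_m ∈ M(X)` as a basis element of `kX_∞`. -/
noncomputable def varWord (s : List X) : RBMod k X :=
  sing k ⟨s.map RBL.var, RBL.wordValid_map_var s⟩

/-- A letter in `X ∪ ⌊X_∞⌋`, viewed as a basis element of `kX_∞` (invalid letters are
sent to `0`; they do not occur below). -/
noncomputable def letterMod (a : RBL X) : RBMod k X :=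
  letI := Classical.dec (RBL.wordValid [a])
  if h : RBL.wordValid [a] then sing k ⟨[a], h⟩ else 0

variable (X)

/-- The tensor product `H^(p) ⊗ H^(q)` of homogeneous components, as a submodule of
`kX_∞ ⊗ kX_∞`. -/
noncomputable def HdegT (p q : ℕ) : Submodule k (RBMod k X ⊗[k] RBMod k X) :=
  Submodule.map₂ (TensorProduct.mk k (RBMod k X) (RBMod k X)) (Hdeg k X p) (Hdeg k X q)

namespace FreeRBAData

variable {k X lam}

/-- The `⋄`-product `w₁ ⋄ (w₂ ⋄ (⋯ ⋄ (w_m ⋄ 1)))` of a sequence of letters. -/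
noncomputable def prodList (D : FreeRBAData k X lam) (l : List (RBL X)) : RBMod k X :=
  l.foldr (fun a acc => D.d (letterMod k a) acc) (sing k RBWord.one)

end FreeRBAData

namespace RBL

variable {X : Type u}

theorem wordValid_iff : ∀ l : List (RBL X),
    wordValid l ↔ (∀ a ∈ l, valid a) ∧ l.IsChain fun a b => ¬(a.isBr = true ∧ b.isBr = true)
  | [] => by simp [wordValid]
  | [a] => by simp [wordValid]
  | a :: b :: l => by
    simp only [wordValid, wordValid_iff (b :: l), List.isChain_cons_cons, List.forall_mem_cons]
    tauto

theorem wordValid_append_iff {p q : List (RBL X)} :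
    wordValid (p ++ q) ↔ wordValid p ∧ wordValid q ∧
      ∀ a ∈ p.getLast?, ∀ b ∈ q.head?, ¬(a.isBr = true ∧ b.isBr = true) := by
  simp only [wordValid_iff, List.forall_mem_append, List.isChain_append]
  tauto

theorem valid_of_mem {l : List (RBL X)} (h : wordValid l) {a : RBL X} (ha : a ∈ l) : valid a :=
  ((wordValid_iff l).1 h).1 a ha

theorem wordValid_singleton_of_mem {l : List (RBL X)} (h : wordValid l) {a : RBL X}
    (ha : a ∈ l) : wordValid [a] :=
  (wordValid_iff [a]).2 ⟨by simpa using valid_of_mem h ha, List.isChain_singleton a⟩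

theorem wordValid_of_cons {a : RBL X} {l : List (RBL X)} (h : wordValid (a :: l)) :
    wordValid l :=
  ((wordValid_append_iff (p := [a])).1 h).2.1

theorem wordValid_append_append {p q r : List (RBL X)} (hpq : wordValid (p ++ q))
    (hqr : wordValid (q ++ r)) (hq : q ≠ []) : wordValid (p ++ q ++ r) := by
  rw [List.append_assoc]
  obtain ⟨hp, -, hjunction⟩ := wordValid_append_iff.1 hpq
  refine wordValid_append_iff.2 ⟨hp, hqr, fun a ha b hb => hjunction a ha b ?_⟩
  rwa [List.head?_append_of_ne_nil _ hq] at hb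

/-- A bracketed letter fits between `p` and `q` (the content `[]` is a placeholder). -/
def IsBrSlot (p q : List (RBL X)) : Prop := wordValid (p ++ [br []] ++ q)

theorem wordValid_of_isBrSlot {p q l : List (RBL X)} (h : IsBrSlot p q) (hl : wordValid l) :
    wordValid (p ++ [br l] ++ q) := by
  rw [IsBrSlot, List.append_assoc] at h
  obtain ⟨hp, hq', hpq⟩ := wordValid_append_iff.1 h
  obtain ⟨-, hq, hbq⟩ := (wordValid_append_iff (p := [br []])).1 hq'
  rw [List.append_assoc]
  refine wordValid_append_iff.2 ⟨hp, wordValid_append_iff.2 ⟨wordValid_br hl, hq, ?_⟩, ?_⟩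
  · simpa [isBr] using hbq
  · simpa [isBr] using hpq

theorem isBrSlot_of_wordValid {p q l l' : List (RBL X)} (hp : wordValid (p ++ [br l]))
    (hq : wordValid (br l' :: q)) : IsBrSlot p q := by
  obtain ⟨hp, -, hpl⟩ := wordValid_append_iff.1 hp
  obtain ⟨-, hq, hlq⟩ := (wordValid_append_iff (p := [br l'])).1 hq
  rw [IsBrSlot, List.append_assoc]
  refine wordValid_append_iff.2
    ⟨hp, wordValid_append_iff.2 ⟨wordValid_br wordValid_nil, hq, ?_⟩, ?_⟩
  · simpa [isBr] using hlq
  · simpa [isBr] using hpl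

theorem degW_append : ∀ p q : List (RBL X), degW (p ++ q) = degW p + degW q
  | [], q => by simp [degW]
  | a :: p, q => by simp [degW, degW_append p q, Nat.add_assoc]

theorem degW_pos {l : List (RBL X)} (h : l ≠ []) : 0 < degW l := by
  obtain ⟨a, l, rfl⟩ := List.exists_cons_of_ne_nil h
  cases a <;> simp [degW, degL]

end RBL

namespace RBWord

variable {X : Type u}

theorem ext {u v : RBWord X} (h : u.1 = v.1) : u = v := Subtype.ext h

def bracket (w : RBWord X) : RBWord X := ⟨[RBL.br w.1], RBL.wordValid_br w.2⟩

theorem deg_bracket (w : RBWord X) : w.bracket.deg = w.deg + 1 := by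
  simp [bracket, deg, RBL.degW, RBL.degL]

theorem deg_append {u v : RBWord X} (h : RBL.wordValid (u.1 ++ v.1)) :
    RBWord.deg ⟨u.1 ++ v.1, h⟩ = u.deg + v.deg :=
  RBL.degW_append u.1 v.1

theorem concat_or_br (u v : RBWord X) :
    RBL.wordValid (u.1 ++ v.1) ∨ ∃ (u₀ v₀ : List (RBL X)) (a b : RBWord X),
      u.1 = u₀ ++ [RBL.br a.1] ∧ v.1 = RBL.br b.1 :: v₀ := by
  by_cases h : RBL.wordValid (u.1 ++ v.1)
  · exact .inl h
  right
  have hjunction := mt (fun hj => RBL.wordValid_append_iff.2 ⟨u.2, v.2, hj⟩) h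
  simp only [not_forall, not_not, exists_prop] at hjunction
  obtain ⟨α, hα, β, hβ, hαbr, hβbr⟩ := hjunction
  obtain ⟨u₀, hu⟩ := List.getLast?_eq_some_iff.1 hα
  obtain ⟨v₀, hv⟩ := List.head?_eq_some_iff.1 hβ
  cases α with
  | var => simp [RBL.isBr] at hαbr
  | br la =>
    cases β with
    | var => simp [RBL.isBr] at hβbr
    | br lb =>
      have hla := RBL.valid_of_mem (hu ▸ u.2) (a := RBL.br la) (by simp)
      have hlb := RBL.valid_of_mem (hv ▸ v.2) (a := RBL.br lb) (by simp)
      exact ⟨u₀, v₀, ⟨la, hla⟩, ⟨lb, hlb⟩, hu, hv⟩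

end RBWord

section Basis

variable {k : Type v} [CommRing k] {X : Type u}

theorem sing_one_of_eq_nil {w : RBWord X} (h : w.1 = []) : sing k w = sing k RBWord.one :=
  congrArg _ (RBWord.ext h)

theorem linearMap_ext_sing {N : Type*} [AddCommMonoid N] [Module k N]
    {F G : RBMod k X →ₗ[k] N} (h : ∀ w, F (sing k w) = G (sing k w)) : F = G :=
  Finsupp.lhom_ext' fun w => LinearMap.ext_ring (h w)

theorem linearMap_ext_sing₂ {N : Type*} [AddCommMonoid N] [Module k N]
    {F G : RBMod k X →ₗ[k] RBMod k X →ₗ[k] N}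
    (h : ∀ u v, F (sing k u) (sing k v) = G (sing k u) (sing k v)) : F = G :=
  LinearMap.ext_basis Finsupp.basisSingleOne Finsupp.basisSingleOne h

theorem eqOn_supported {N : Type*} [AddCommMonoid N] [Module k N] {S : Set (RBWord X)}
    {F G : RBMod k X →ₗ[k] N} (h : ∀ w ∈ S, F (sing k w) = G (sing k w))
    {x : RBMod k X} (hx : x ∈ Finsupp.supported k k S) : F x = G x := by
  rw [Finsupp.supported_eq_span_single] at hx
  exact LinearMap.eqOn_span' (by rintro _ ⟨w, hw, rfl⟩; exact h w hw) hx

theorem map_mem_of_mem_supported {N : Type*} [AddCommMonoid N] [Module k N]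
    {S : Set (RBWord X)} {F : RBMod k X →ₗ[k] N} {T : Submodule k N}
    (h : ∀ w ∈ S, F (sing k w) ∈ T) {x : RBMod k X} (hx : x ∈ Finsupp.supported k k S) :
    F x ∈ T := by
  rw [Finsupp.supported_eq_span_single] at hx
  exact (Submodule.span_le (p := T.comap F)).2 (by rintro _ ⟨w, hw, rfl⟩; exact h w hw) hx

theorem Pop_sing (w : RBWord X) : Pop k X (sing k w) = sing k w.bracket :=
  Finsupp.mapDomain_single

theorem concatLR_sing {p q : List (RBL X)} {w : RBWord X} (h : RBL.wordValid (p ++ w.1 ++ q)) :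
    concatLR k X p q (sing k w) = sing k ⟨p ++ w.1 ++ q, h⟩ := by
  simp only [concatLR, sing, Finsupp.lsum_single, dif_pos h]
  rfl

theorem concatLR_Pop_sing {p q : List (RBL X)} (h : RBL.IsBrSlot p q) (w : RBWord X) :
    concatLR k X p q (Pop k X (sing k w))
      = sing k ⟨p ++ [RBL.br w.1] ++ q, RBL.wordValid_of_isBrSlot h w.2⟩ := by
  rw [Pop_sing, concatLR_sing]
  rfl

theorem concatLR_nil_nil_Pop (y : RBMod k X) : concatLR k X [] [] (Pop k X y) = Pop k X y := by
  have hslot : RBL.IsBrSlot ([] : List (RBL X)) [] := RBL.wordValid_br RBL.wordValid_nil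
  refine LinearMap.congr_fun (linearMap_ext_sing (F := concatLR k X [] [] ∘ₗ Pop k X)
    (G := Pop k X) fun w => ?_) y
  rw [LinearMap.comp_apply, concatLR_Pop_sing hslot, Pop_sing]
  rfl

end Basis

noncomputable def degLE (k : Type v) [CommRing k] (X : Type u) (n : ℕ) : Submodule k (RBMod k X) :=
  Finsupp.supported k k {w : RBWord X | w.deg ≤ n}

section Degree

variable {k : Type v} [CommRing k] {X : Type u}

theorem sing_mem_degLE {w : RBWord X} {n : ℕ} (h : w.deg ≤ n) : sing k w ∈ degLE k X n :=
  Finsupp.single_mem_supported k 1 h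

theorem degLE_mono {m n : ℕ} (h : m ≤ n) : degLE k X m ≤ degLE k X n :=
  Finsupp.supported_mono fun _ hw => le_trans hw h

theorem concatLR_Pop_mem_degLE {p q : List (RBL X)} (hslot : RBL.IsBrSlot p q)
    {y : RBMod k X} {n : ℕ} (hy : y ∈ degLE k X n) :
    concatLR k X p q (Pop k X y) ∈ degLE k X (RBL.degW p + (n + 1) + RBL.degW q) := by
  refine map_mem_of_mem_supported (F := concatLR k X p q ∘ₗ Pop k X) (fun w hw => ?_) hy
  rw [LinearMap.comp_apply, concatLR_Pop_sing hslot]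
  refine sing_mem_degLE ?_
  have hw : w.deg ≤ n := hw
  simp only [RBWord.deg, RBL.degW_append, RBL.degW, RBL.degL] at hw ⊢
  omega

end Degree

namespace FreeRBAData

variable {k : Type v} [CommRing k] {X : Type u} {lam : k} (D : FreeRBAData k X lam)

theorem d_one_left (x : RBMod k X) : D.d (sing k RBWord.one) x = x :=
  LinearMap.congr_fun
    (linearMap_ext_sing (G := LinearMap.id) fun w => D.d_concat RBWord.one w w.2) x

theorem d_one_right (x : RBMod k X) : D.d x (sing k RBWord.one) = x := by
  refine LinearMap.congr_fun (linearMap_ext_sing (F := D.d.flip (sing k RBWord.one))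
    (G := LinearMap.id) fun w => ?_) x
  have h : RBL.wordValid (w.1 ++ (RBWord.one : RBWord X).1) := by simpa [RBWord.one] using w.2
  rw [LinearMap.flip_apply, D.d_concat w _ h]
  exact congrArg _ (RBWord.ext (List.append_nil _))

/-- The product `x ⋆ y = P(x) ⋄ y + x ⋄ P(y) + λ x ⋄ y`, so that `P(x) ⋄ P(y) = P(x ⋆ y)`. -/
noncomputable def star : RBMod k X →ₗ[k] RBMod k X →ₗ[k] RBMod k X :=
  D.d.compl₁₂ (Pop k X) LinearMap.id + D.d.compl₂ (Pop k X) + lam • D.d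

theorem star_apply (x y : RBMod k X) :
    D.star x y = D.d (Pop k X x) y + D.d x (Pop k X y) + lam • D.d x y := rfl

theorem d_sing_br_br {u v : RBWord X} {u₀ v₀ : List (RBL X)} {a b : RBWord X}
    (hu : u.1 = u₀ ++ [RBL.br a.1]) (hv : v.1 = RBL.br b.1 :: v₀) :
    D.d (sing k u) (sing k v) = concatLR k X u₀ v₀ (Pop k X (D.star (sing k a) (sing k b))) := by
  obtain ⟨u, hu'⟩ := u
  obtain ⟨v, hv'⟩ := v
  subst hu hv
  rw [D.d_br, star_apply]
  simp only [map_add, map_smul]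

theorem d_Pop_Pop (x y : RBMod k X) :
    D.d (Pop k X x) (Pop k X y) = Pop k X (D.star x y) := by
  refine LinearMap.congr_fun₂ (linearMap_ext_sing₂ (F := D.d.compl₁₂ (Pop k X) (Pop k X))
    (G := D.star.compr₂ (Pop k X)) fun a b => ?_) x y
  rw [LinearMap.compl₁₂_apply, LinearMap.compr₂_apply, Pop_sing, Pop_sing,
    D.d_sing_br_br (u₀ := []) rfl rfl, concatLR_nil_nil_Pop]

theorem d_sing_mem_degLE (u v : RBWord X) :
    D.d (sing k u) (sing k v) ∈ degLE k X (u.deg + v.deg) := by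
  rcases u.concat_or_br v with h | ⟨u₀, v₀, a, b, hu, hv⟩
  · rw [D.d_concat u v h]
    exact sing_mem_degLE (RBWord.deg_append h).le
  · have hdu : u.deg = RBL.degW u₀ + (a.deg + 1) := by
      simp [RBWord.deg, hu, RBL.degW_append, RBL.degW, RBL.degL]
    have hdv : v.deg = b.deg + 1 + RBL.degW v₀ := by
      simp [RBWord.deg, hv, RBL.degW, RBL.degL]
    have hstar : D.star (sing k a) (sing k b) ∈ degLE k X (a.deg + 1 + b.deg) := by
      have h₁ := d_sing_mem_degLE a.bracket b
      have h₂ := d_sing_mem_degLE a b.bracket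
      have h₃ := d_sing_mem_degLE a b
      rw [RBWord.deg_bracket] at h₁ h₂
      rw [star_apply, Pop_sing, Pop_sing]
      exact add_mem (add_mem h₁ (degLE_mono (by omega) h₂))
        (Submodule.smul_mem _ _ (degLE_mono (by omega) h₃))
    rw [D.d_sing_br_br hu hv]
    have hslot := RBL.isBrSlot_of_wordValid (hu ▸ u.2) (hv ▸ v.2)
    exact degLE_mono (by omega) (concatLR_Pop_mem_degLE hslot hstar)
termination_by u.deg + v.deg
decreasing_by all_goals simp only [RBWord.deg_bracket] at *; omega

end FreeRBAData

namespace FreeRBAData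

variable {k : Type v} [CommRing k] {X : Type u} {lam : k} (D : FreeRBAData k X lam)

def AssocOn (u v w : RBWord X) : Prop :=
  D.d (D.d (sing k u) (sing k v)) (sing k w) = D.d (sing k u) (D.d (sing k v) (sing k w))

theorem d_assoc_of_mem_degLE {p q : ℕ} {v : RBWord X}
    (h : ∀ u w : RBWord X, u.deg ≤ p → w.deg ≤ q → D.AssocOn u v w)
    {x z : RBMod k X} (hx : x ∈ degLE k X p) (hz : z ∈ degLE k X q) :
    D.d (D.d x (sing k v)) z = D.d x (D.d (sing k v) z) := by
  have hu : ∀ u : RBWord X, u.deg ≤ p →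
      D.d (D.d (sing k u) (sing k v)) z = D.d (sing k u) (D.d (sing k v) z) := fun u hu =>
    eqOn_supported (F := D.d (D.d (sing k u) (sing k v)))
      (G := D.d (sing k u) ∘ₗ D.d (sing k v)) (fun w hw => h u w hu hw) hz
  exact eqOn_supported (F := D.d.flip z ∘ₗ D.d.flip (sing k v))
    (G := D.d.flip (D.d (sing k v) z)) hu hx

theorem assocOn_of_concat_concat {u v w : RBWord X} (huv : RBL.wordValid (u.1 ++ v.1))
    (hvw : RBL.wordValid (v.1 ++ w.1)) (hv : v.1 ≠ []) : D.AssocOn u v w := by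
  have huvw := RBL.wordValid_append_append huv hvw hv
  rw [AssocOn, D.d_concat u v huv, D.d_concat ⟨_, huv⟩ w huvw, D.d_concat v w hvw,
    D.d_concat u ⟨_, hvw⟩ (List.append_assoc u.1 v.1 w.1 ▸ huvw)]
  exact congrArg _ (RBWord.ext (List.append_assoc _ _ _))

theorem d_sing_concatLR_Pop {u : RBWord X} {p q : List (RBL X)} (hslot : RBL.IsBrSlot p q)
    (hslot' : RBL.IsBrSlot (u.1 ++ p) q) (y : RBMod k X) :
    D.d (sing k u) (concatLR k X p q (Pop k X y)) = concatLR k X (u.1 ++ p) q (Pop k X y) := by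
  refine LinearMap.congr_fun (linearMap_ext_sing
    (F := D.d (sing k u) ∘ₗ concatLR k X p q ∘ₗ Pop k X)
    (G := concatLR k X (u.1 ++ p) q ∘ₗ Pop k X) fun m => ?_) y
  simp only [LinearMap.comp_apply, concatLR_Pop_sing hslot, concatLR_Pop_sing hslot']
  exact (D.d_concat u _ (by simpa only [List.append_assoc] using
    RBL.wordValid_of_isBrSlot hslot' m.2)).trans (congrArg _ (RBWord.ext (by simp)))

theorem d_concatLR_Pop_sing {w : RBWord X} {p q : List (RBL X)} (hslot : RBL.IsBrSlot p q)
    (hslot' : RBL.IsBrSlot p (q ++ w.1)) (y : RBMod k X) :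
    D.d (concatLR k X p q (Pop k X y)) (sing k w) = concatLR k X p (q ++ w.1) (Pop k X y) := by
  refine LinearMap.congr_fun (linearMap_ext_sing
    (F := D.d.flip (sing k w) ∘ₗ concatLR k X p q ∘ₗ Pop k X)
    (G := concatLR k X p (q ++ w.1) ∘ₗ Pop k X) fun m => ?_) y
  simp only [LinearMap.comp_apply, LinearMap.flip_apply, concatLR_Pop_sing hslot,
    concatLR_Pop_sing hslot']
  exact (D.d_concat _ w (by simpa only [List.append_assoc] using
    RBL.wordValid_of_isBrSlot hslot' m.2)).trans (congrArg _ (RBWord.ext (by simp)))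

theorem assocOn_of_concat_br {u v w : RBWord X} {v₀ w₀ : List (RBL X)} {c e : RBWord X}
    (huv : RBL.wordValid (u.1 ++ v.1)) (hv : v.1 = v₀ ++ [RBL.br c.1])
    (hw : w.1 = RBL.br e.1 :: w₀) : D.AssocOn u v w := by
  have huv' : RBL.wordValid (u.1 ++ v₀ ++ [RBL.br c.1]) := by
    rwa [List.append_assoc, ← hv]
  have hslot := RBL.isBrSlot_of_wordValid (hv ▸ v.2) (hw ▸ w.2)
  have hslot' := RBL.isBrSlot_of_wordValid huv' (hw ▸ w.2)
  rw [AssocOn, D.d_concat u v huv, D.d_sing_br_br (u := ⟨_, huv⟩) (u₀ := u.1 ++ v₀) (a := c)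
    (show u.1 ++ v.1 = _ by rw [hv, List.append_assoc]) hw,
    D.d_sing_br_br hv hw, D.d_sing_concatLR_Pop hslot hslot']

theorem assocOn_of_br_concat {u v w : RBWord X} {u₀ v₀ : List (RBL X)} {a b : RBWord X}
    (hu : u.1 = u₀ ++ [RBL.br a.1]) (hv : v.1 = RBL.br b.1 :: v₀)
    (hvw : RBL.wordValid (v.1 ++ w.1)) : D.AssocOn u v w := by
  have hvw' : RBL.wordValid (RBL.br b.1 :: (v₀ ++ w.1)) := by
    rwa [← List.cons_append, ← hv]
  have hslot := RBL.isBrSlot_of_wordValid (hu ▸ u.2) (hv ▸ v.2)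
  have hslot' := RBL.isBrSlot_of_wordValid (hu ▸ u.2) hvw'
  rw [AssocOn, D.d_sing_br_br hu hv, D.d_concatLR_Pop_sing hslot hslot', D.d_concat v w hvw,
    D.d_sing_br_br (v := ⟨_, hvw⟩) (v₀ := v₀ ++ w.1) (b := b) hu
      (show v.1 ++ w.1 = _ by rw [hv, List.cons_append])]

end FreeRBAData

namespace FreeRBAData

variable {k : Type v} [CommRing k] {X : Type u} {lam : k} (D : FreeRBAData k X lam)

theorem d_concatLR_Pop_sing_br {w : RBWord X} {p w₀ : List (RBL X)} {c : RBWord X}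
    (hslot : RBL.IsBrSlot p []) (hw : w.1 = RBL.br c.1 :: w₀) (y : RBMod k X) :
    D.d (concatLR k X p [] (Pop k X y)) (sing k w)
      = concatLR k X p w₀ (Pop k X (D.star y (sing k c))) := by
  refine LinearMap.congr_fun (linearMap_ext_sing
    (F := D.d.flip (sing k w) ∘ₗ concatLR k X p [] ∘ₗ Pop k X)
    (G := concatLR k X p w₀ ∘ₗ Pop k X ∘ₗ D.star.flip (sing k c)) fun m => ?_) y
  simp only [LinearMap.comp_apply, LinearMap.flip_apply, concatLR_Pop_sing hslot]
  exact D.d_sing_br_br (u₀ := p) (a := m) (by simp) hw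

theorem d_sing_concatLR_Pop_br {u : RBWord X} {u₀ q : List (RBL X)} {a : RBWord X}
    (hu : u.1 = u₀ ++ [RBL.br a.1]) (hslot : RBL.IsBrSlot [] q) (y : RBMod k X) :
    D.d (sing k u) (concatLR k X [] q (Pop k X y))
      = concatLR k X u₀ q (Pop k X (D.star (sing k a) y)) := by
  refine LinearMap.congr_fun (linearMap_ext_sing
    (F := D.d (sing k u) ∘ₗ concatLR k X [] q ∘ₗ Pop k X)
    (G := concatLR k X u₀ q ∘ₗ Pop k X ∘ₗ D.star (sing k a)) fun m => ?_) y
  simp only [LinearMap.comp_apply, concatLR_Pop_sing hslot]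
  exact D.d_sing_br_br (v₀ := q) (b := m) hu (by simp)

/-- The case `⌊a⌋ ⋄ ⌊b⌋ ⋄ ⌊c⌋` of associativity, read inside the bracket. -/
theorem star_star_sing (a b c : RBWord X)
    (h : ∀ x y z : RBWord X, x.deg + y.deg + z.deg ≤ a.deg + b.deg + c.deg + 2 →
      D.AssocOn x y z) :
    D.star (D.star (sing k a) (sing k b)) (sing k c)
      = D.star (sing k a) (D.star (sing k b) (sing k c)) := by
  have h₁ := h a.bracket b.bracket c
  have h₂ := h a.bracket b c.bracket
  have h₃ := h a b.bracket c.bracket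
  have h₄ := h a b c.bracket
  have h₅ := h a.bracket b c
  have h₆ := h a b.bracket c
  have h₇ := h a b c
  simp only [RBWord.deg_bracket, AssocOn] at h₁ h₂ h₃ h₄ h₅ h₆ h₇
  rw [D.star_apply (D.star _ _), D.star_apply _ (D.star _ _), ← D.d_Pop_Pop, ← D.d_Pop_Pop,
    D.star_apply (sing k a), D.star_apply (sing k b)]
  simp only [map_add, map_smul, LinearMap.add_apply, LinearMap.smul_apply, Pop_sing]
  rw [h₁ (by omega), h₂ (by omega), h₃ (by omega), h₄ (by omega), h₅ (by omega),
    h₆ (by omega), h₇ (by omega)]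
  module

theorem assocOn_br_br_br {u v w : RBWord X} {u₀ w₀ : List (RBL X)} {a b c : RBWord X}
    (hu : u.1 = u₀ ++ [RBL.br a.1]) (hv : v.1 = [RBL.br b.1]) (hw : w.1 = RBL.br c.1 :: w₀)
    (ih : ∀ x y z : RBWord X, x.deg + y.deg + z.deg < u.deg + v.deg + w.deg →
      D.AssocOn x y z) :
    D.AssocOn u v w := by
  have hbr : RBL.wordValid [RBL.br ([] : List (RBL X))] := RBL.wordValid_br RBL.wordValid_nil
  have hslot_u := RBL.isBrSlot_of_wordValid (q := []) (hu ▸ u.2) hbr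
  have hslot_w := RBL.isBrSlot_of_wordValid (p := []) hbr (hw ▸ w.2)
  have hdeg : a.deg + b.deg + c.deg + 3 ≤ u.deg + v.deg + w.deg := by
    simp only [RBWord.deg, hu, hv, hw, RBL.degW_append, RBL.degW, RBL.degL]
    omega
  rw [AssocOn, D.d_sing_br_br hu hv, D.d_concatLR_Pop_sing_br hslot_u hw,
    D.d_sing_br_br (u₀ := []) hv hw, D.d_sing_concatLR_Pop_br hu hslot_w,
    D.star_star_sing a b c fun x y z hxyz => ih x y z (by omega)]

theorem assocOn_of_letter {n : ℕ}
    (ih : ∀ x y z : RBWord X, x.deg + y.deg + z.deg < n → D.AssocOn x y z)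
    {u v w : RBWord X} {β : RBL X} (hv : v.1 = [β]) (hn : u.deg + v.deg + w.deg ≤ n) :
    D.AssocOn u v w := by
  rcases u.concat_or_br v with huv | ⟨u₀, v₀, a, b, hu, hv'⟩ <;>
    rcases v.concat_or_br w with hvw | ⟨v₁, w₀, c, e, hv'', hw⟩
  · exact D.assocOn_of_concat_concat huv hvw (by simp [hv])
  · exact D.assocOn_of_concat_br huv hv'' hw
  · exact D.assocOn_of_br_concat hu hv' hvw
  · have hv₀ : v₀ = [] := by rw [hv] at hv'; exact (List.cons.inj hv').2.symm
    subst hv₀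
    exact D.assocOn_br_br_br hu hv' hw fun x y z h => ih x y z (by omega)

theorem assocOn_of_le {n : ℕ}
    (ih : ∀ x y z : RBWord X, x.deg + y.deg + z.deg < n → D.AssocOn x y z)
    (u v w : RBWord X) (hn : u.deg + v.deg + w.deg ≤ n) : D.AssocOn u v w := by
  induction hv : v.1 generalizing u v w with
  | nil => rw [AssocOn, sing_one_of_eq_nil hv, D.d_one_right, D.d_one_left]
  | cons β l ihl =>
    rcases eq_or_ne l [] with rfl | hl₀
    · exact D.assocOn_of_letter ih hv hn
    have hβl : RBL.wordValid ([β] ++ l) := by simpa [hv] using v.2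
    let vβ : RBWord X := ⟨[β], RBL.wordValid_singleton_of_mem hβl (by simp)⟩
    let vl : RBWord X := ⟨l, RBL.wordValid_of_cons hβl⟩
    have hsplit : D.d (sing k vβ) (sing k vl) = sing k v :=
      (D.d_concat vβ vl hβl).trans (congrArg _ (RBWord.ext hv.symm))
    have hdeg : vβ.deg + vl.deg = v.deg := by
      rw [← RBWord.deg_append (u := vβ) (v := vl) hβl]
      exact congrArg RBL.degW hv.symm
    have hβ : ∀ x z : RBWord X, x.deg + vβ.deg + z.deg ≤ n → D.AssocOn x vβ z :=
      fun x z h => D.assocOn_of_letter ih rfl h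
    have hl : ∀ x z : RBWord X, x.deg + vl.deg + z.deg ≤ n → D.AssocOn x vl z :=
      fun x z h => ihl x vl z h rfl
    rw [AssocOn, ← hsplit]
    calc D.d (D.d (sing k u) (D.d (sing k vβ) (sing k vl))) (sing k w)
        = D.d (D.d (D.d (sing k u) (sing k vβ)) (sing k vl)) (sing k w) := by
          rw [hβ u vl (by omega)]
      _ = D.d (D.d (sing k u) (sing k vβ)) (D.d (sing k vl) (sing k w)) :=
          D.d_assoc_of_mem_degLE (fun x z hx hz => hl x z (by omega))
            (D.d_sing_mem_degLE u vβ) (sing_mem_degLE le_rfl)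
      _ = D.d (sing k u) (D.d (sing k vβ) (D.d (sing k vl) (sing k w))) :=
          D.d_assoc_of_mem_degLE (fun x z hx hz => hβ x z (by omega))
            (sing_mem_degLE le_rfl) (D.d_sing_mem_degLE vl w)
      _ = D.d (sing k u) (D.d (D.d (sing k vβ) (sing k vl)) (sing k w)) := by
          rw [hl vβ w (by omega)]

theorem assocOn (u v w : RBWord X) : D.AssocOn u v w := by
  induction hn : u.deg + v.deg + w.deg using Nat.strong_induction_on generalizing u v w with
  | _ n ih => exact D.assocOn_of_le (fun x y z h => ih _ h x y z rfl) u v w hn.le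

theorem d_assoc (x y z : RBMod k X) : D.d (D.d x y) z = D.d x (D.d y z) := by
  have h := linearMap_ext_sing₂ (F := D.d.compr₂ D.d)
    (G := (LinearMap.llcomp k _ _ _).compl₁₂ D.d D.d) fun u v =>
      linearMap_ext_sing fun w => D.assocOn u v w
  exact LinearMap.congr_fun (LinearMap.congr_fun₂ h x y) z

end FreeRBAData

namespace FreeRBAData

variable {k : Type v} [CommRing k] {X : Type u} {lam : k} (D : FreeRBAData k X lam)

theorem mulT_tmul (x₁ x₂ y₁ y₂ : RBMod k X) :
    D.mulT (x₁ ⊗ₜ x₂) (y₁ ⊗ₜ y₂) = D.d x₁ y₁ ⊗ₜ D.d x₂ y₂ := by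
  rw [mulT, TensorProduct.map₂_apply_tmul, TensorProduct.map_tmul]

theorem mulT_one_left (t : RBMod k X ⊗[k] RBMod k X) :
    D.mulT (sing k RBWord.one ⊗ₜ sing k RBWord.one) t = t := by
  induction t using TensorProduct.induction_on with
  | zero => exact map_zero _
  | tmul y₁ y₂ => rw [D.mulT_tmul, D.d_one_left, D.d_one_left]
  | add s t hs ht => rw [map_add, hs, ht]

theorem mulT_one_right (t : RBMod k X ⊗[k] RBMod k X) :
    D.mulT t (sing k RBWord.one ⊗ₜ sing k RBWord.one) = t := by
  induction t using TensorProduct.induction_on with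
  | zero => rw [map_zero, LinearMap.zero_apply]
  | tmul y₁ y₂ => rw [D.mulT_tmul, D.d_one_right, D.d_one_right]
  | add s t hs ht => rw [map_add, LinearMap.add_apply, hs, ht]

theorem mulT_assoc (r s t : RBMod k X ⊗[k] RBMod k X) :
    D.mulT (D.mulT r s) t = D.mulT r (D.mulT s t) := by
  induction r using TensorProduct.induction_on with
  | zero => simp
  | add r r' hr hr' => simp only [map_add, LinearMap.add_apply, hr, hr']
  | tmul r₁ r₂ =>
    induction s using TensorProduct.induction_on with
    | zero => simp
    | add s s' hs hs' => simp only [map_add, LinearMap.add_apply, hs, hs']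
    | tmul s₁ s₂ =>
      induction t using TensorProduct.induction_on with
      | zero => simp
      | add t t' ht ht' => simp only [map_add, ht, ht']
      | tmul t₁ t₂ => simp only [mulT_tmul, D.d_assoc]

theorem mulT_tmul_one_lTensor (x : RBMod k X) (t : RBMod k X ⊗[k] RBMod k X) :
    D.mulT (x ⊗ₜ sing k RBWord.one) ((Pop k X).lTensor _ t)
      = (Pop k X).lTensor _ (D.mulT (x ⊗ₜ sing k RBWord.one) t) := by
  induction t using TensorProduct.induction_on with
  | zero => simp
  | add s t hs ht => simp only [map_add, hs, ht]
  | tmul y₁ y₂ => simp only [LinearMap.lTensor_tmul, mulT_tmul, D.d_one_left]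

theorem mulT_lTensor_tmul_one (t : RBMod k X ⊗[k] RBMod k X) (y : RBMod k X) :
    D.mulT ((Pop k X).lTensor _ t) (y ⊗ₜ sing k RBWord.one)
      = (Pop k X).lTensor _ (D.mulT t (y ⊗ₜ sing k RBWord.one)) := by
  induction t using TensorProduct.induction_on with
  | zero => simp
  | add s t hs ht => simp only [map_add, LinearMap.add_apply, hs, ht]
  | tmul x₁ x₂ => simp only [LinearMap.lTensor_tmul, mulT_tmul, D.d_one_right]

theorem mulT_lTensor_lTensor (s t : RBMod k X ⊗[k] RBMod k X) :
    D.mulT ((Pop k X).lTensor _ s) ((Pop k X).lTensor _ t)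
      = (Pop k X).lTensor _ (D.mulT ((Pop k X).lTensor _ s) t
          + D.mulT s ((Pop k X).lTensor _ t) + lam • D.mulT s t) := by
  induction s using TensorProduct.induction_on with
  | zero => simp
  | add s s' hs hs' =>
    simp only [map_add, LinearMap.add_apply, hs, hs', smul_add]
    abel
  | tmul s₁ s₂ =>
    induction t using TensorProduct.induction_on with
    | zero => simp
    | add t t' ht ht' =>
      simp only [map_add, ht, ht', smul_add]
      abel
    | tmul t₁ t₂ =>
      simp only [LinearMap.lTensor_tmul, mulT_tmul, D.d_Pop_Pop, D.star_apply,
        TensorProduct.tmul_add, TensorProduct.tmul_smul, map_add, map_smul]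

end FreeRBAData

namespace FreeRBBialgData

variable {k : Type v} [CommRing k] {X : Type u} {lam : k} (D : FreeRBBialgData k X lam)

theorem Dl_Pop (y : RBMod k X) :
    D.Dl (Pop k X y) = Pop k X y ⊗ₜ sing k RBWord.one + (Pop k X).lTensor _ (D.Dl y) :=
  LinearMap.congr_fun (linearMap_ext_sing (F := D.Dl ∘ₗ Pop k X)
    (G := (TensorProduct.mk k _ _).flip (sing k RBWord.one) ∘ₗ Pop k X
      + (Pop k X).lTensor _ ∘ₗ D.Dl) fun w => D.Dl_br w) y

theorem Dl_d_Pop_Pop (x y : RBMod k X)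
    (h₁ : D.Dl (D.d (Pop k X x) y) = D.mulT (D.Dl (Pop k X x)) (D.Dl y))
    (h₂ : D.Dl (D.d x (Pop k X y)) = D.mulT (D.Dl x) (D.Dl (Pop k X y)))
    (h₃ : D.Dl (D.d x y) = D.mulT (D.Dl x) (D.Dl y)) :
    D.Dl (D.d (Pop k X x) (Pop k X y)) = D.mulT (D.Dl (Pop k X x)) (D.Dl (Pop k X y)) := by
  rw [D.d_Pop_Pop, D.Dl_Pop, D.star_apply]
  simp only [map_add, map_smul, h₁, h₂, h₃, D.Dl_Pop, LinearMap.add_apply, D.mulT_tmul,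
    D.mulT_tmul_one_lTensor, D.mulT_lTensor_tmul_one, D.mulT_lTensor_lTensor, D.d_one_left,
    D.d_Pop_Pop, D.star_apply, TensorProduct.add_tmul]
  abel

theorem Dl_sing_of_eq_cons {w u v : RBWord X} {α : RBL X} (hu : u.1 = [α])
    (hw : w.1 = α :: v.1) (hv : v.1 ≠ []) :
    D.Dl (sing k w) = D.mulT (D.Dl (sing k u)) (D.Dl (sing k v)) := by
  have hw' : RBL.wordValid (α :: v.1) := hw ▸ w.2
  rw [congrArg (sing k) (RBWord.ext hw (v := ⟨_, hw'⟩)),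
    congrArg (sing k) (RBWord.ext hu (v := ⟨_, hu ▸ u.2⟩)), D.Dl_cons α v.1 hw' _ v.2 hv]
  rfl

theorem Dl_concatLR_Pop {q : List (RBL X)} (hslot : RBL.IsBrSlot [] q) (hq : q ≠ [])
    (y : RBMod k X) :
    D.Dl (concatLR k X [] q (Pop k X y))
      = D.mulT (D.Dl (Pop k X y)) (D.Dl (sing k ⟨q, RBL.wordValid_of_cons hslot⟩)) := by
  refine LinearMap.congr_fun (linearMap_ext_sing (F := D.Dl ∘ₗ concatLR k X [] q ∘ₗ Pop k X)
    (G := D.mulT.flip (D.Dl (sing k ⟨q, RBL.wordValid_of_cons hslot⟩)) ∘ₗ D.Dl ∘ₗ Pop k X)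
    fun m => ?_) y
  simp only [LinearMap.comp_apply, LinearMap.flip_apply]
  rw [concatLR_Pop_sing hslot, Pop_sing]
  exact D.Dl_sing_of_eq_cons (v := ⟨q, _⟩) rfl rfl hq

def MultOn (u v : RBWord X) : Prop :=
  D.Dl (D.d (sing k u) (sing k v)) = D.mulT (D.Dl (sing k u)) (D.Dl (sing k v))

theorem multOn_of_eq_nil_left {u : RBWord X} (hu : u.1 = []) (v : RBWord X) : D.MultOn u v := by
  rw [MultOn, sing_one_of_eq_nil hu, D.d_one_left, D.Dl_one, D.mulT_one_left]

theorem multOn_of_eq_nil_right (u : RBWord X) {v : RBWord X} (hv : v.1 = []) : D.MultOn u v := by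
  rw [MultOn, sing_one_of_eq_nil hv, D.d_one_right, D.Dl_one, D.mulT_one_right]

theorem multOn_br_br {u v : RBWord X} {a b : RBWord X} (hu : u.1 = [RBL.br a.1])
    (hv : v.1 = [RBL.br b.1])
    (ih : ∀ x y : RBWord X, x.deg + y.deg < u.deg + v.deg → D.MultOn x y) : D.MultOn u v := by
  have hdeg : a.deg + b.deg + 2 = u.deg + v.deg := by
    simp [RBWord.deg, hu, hv, RBL.degW, RBL.degL]
    omega
  have h₁ := ih a.bracket b (by rw [RBWord.deg_bracket]; omega)
  have h₂ := ih a b.bracket (by rw [RBWord.deg_bracket]; omega)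
  have h₃ := ih a b (by omega)
  rw [MultOn, ← Pop_sing] at h₁ h₂
  rw [MultOn, ((Pop_sing a).trans (congrArg (sing k) (RBWord.ext hu.symm))).symm,
    ((Pop_sing b).trans (congrArg (sing k) (RBWord.ext hv.symm))).symm]
  exact D.Dl_d_Pop_Pop _ _ h₁ h₂ h₃

theorem multOn_br_br_cons {u v : RBWord X} {v₀ : List (RBL X)} {a b : RBWord X}
    (hu : u.1 = [RBL.br a.1]) (hv : v.1 = RBL.br b.1 :: v₀) (hv₀ : v₀ ≠ [])
    (h : D.MultOn u b.bracket) : D.MultOn u v := by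
  have hbr : RBL.wordValid [RBL.br ([] : List (RBL X))] := RBL.wordValid_br RBL.wordValid_nil
  have hslot := RBL.isBrSlot_of_wordValid (p := []) hbr (hv ▸ v.2)
  have hPstar : Pop k X (D.star (sing k a) (sing k b)) = D.d (sing k u) (sing k b.bracket) := by
    rw [D.d_sing_br_br (u₀ := []) (v₀ := []) hu rfl, concatLR_nil_nil_Pop]
  rw [MultOn, D.d_sing_br_br (u₀ := []) hu hv, D.Dl_concatLR_Pop hslot hv₀, hPstar, h,
    D.mulT_assoc, ← D.Dl_sing_of_eq_cons (v := ⟨v₀, _⟩) rfl hv hv₀]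

theorem multOn_of_letter {n : ℕ} (ih : ∀ x y : RBWord X, x.deg + y.deg < n → D.MultOn x y)
    {u v : RBWord X} {α : RBL X} (hu : u.1 = [α]) (hn : u.deg + v.deg ≤ n) :
    D.MultOn u v := by
  rcases eq_or_ne v.1 [] with hv | hv
  · exact D.multOn_of_eq_nil_right u hv
  rcases u.concat_or_br v with huv | ⟨u₀, v₀, a, b, hu', hv'⟩
  · rw [MultOn, D.d_concat u v huv]
    exact D.Dl_sing_of_eq_cons hu (by simp [hu]) hv
  have hu₀ : u₀ = [] := by simpa [hu] using congrArg List.length hu'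
  subst hu₀
  rcases eq_or_ne v₀ [] with rfl | hv₀
  · exact D.multOn_br_br hu' hv' fun x y h => ih x y (by omega)
  · refine D.multOn_br_br_cons hu' hv' hv₀ (ih _ _ ?_)
    have hdv : b.bracket.deg + RBL.degW v₀ = v.deg := by
      simp [RBWord.bracket, RBWord.deg, hv', RBL.degW]
    have := RBL.degW_pos hv₀
    omega

theorem multOn_of_cons {u v uα ul : RBWord X} {α : RBL X} (hα : uα.1 = [α])
    (hu : u.1 = α :: ul.1) (hl : ul.1 ≠ [])
    (hαw : ∀ w : RBWord X, w.deg ≤ ul.deg + v.deg → D.MultOn uα w) (hlv : D.MultOn ul v) :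
    D.MultOn u v := by
  have hsplit : D.d (sing k uα) (sing k ul) = sing k u :=
    (D.d_concat uα ul (by rw [hα, List.singleton_append, ← hu]; exact u.2)).trans
      (congrArg _ (RBWord.ext (show uα.1 ++ ul.1 = u.1 by rw [hα, hu]; rfl)))
  calc D.Dl (D.d (sing k u) (sing k v))
      = D.Dl (D.d (sing k uα) (D.d (sing k ul) (sing k v))) := by rw [← hsplit, D.d_assoc]
    _ = D.mulT (D.Dl (sing k uα)) (D.Dl (D.d (sing k ul) (sing k v))) :=
        eqOn_supported (F := D.Dl ∘ₗ D.d (sing k uα)) (G := D.mulT (D.Dl (sing k uα)) ∘ₗ D.Dl)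
          hαw (D.d_sing_mem_degLE ul v)
    _ = D.mulT (D.Dl (sing k u)) (D.Dl (sing k v)) := by
        rw [hlv, ← D.mulT_assoc, ← D.Dl_sing_of_eq_cons hα hu hl]

theorem multOn_of_le {n : ℕ} (ih : ∀ x y : RBWord X, x.deg + y.deg < n → D.MultOn x y)
    (u v : RBWord X) (hn : u.deg + v.deg ≤ n) : D.MultOn u v := by
  match hu : u.1 with
  | [] => exact D.multOn_of_eq_nil_left hu v
  | [α] => exact D.multOn_of_letter ih hu hn
  | α :: β :: l =>
    have hαl : RBL.wordValid ([α] ++ β :: l) := by rw [List.singleton_append, ← hu]; exact u.2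
    let uα : RBWord X := ⟨[α], RBL.wordValid_singleton_of_mem hαl (by simp)⟩
    let ul : RBWord X := ⟨β :: l, RBL.wordValid_of_cons hαl⟩
    have hdeg : uα.deg + ul.deg = u.deg := by
      rw [← RBWord.deg_append (u := uα) (v := ul) hαl]
      exact congrArg RBL.degW hu.symm
    have hαpos : 0 < uα.deg := RBL.degW_pos (List.cons_ne_nil _ _)
    exact D.multOn_of_cons (uα := uα) (ul := ul) rfl hu (List.cons_ne_nil _ _)
      (fun w hw => D.multOn_of_letter ih rfl (by omega)) (ih ul v (by omega))

theorem multOn (u v : RBWord X) : D.MultOn u v := by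
  induction hn : u.deg + v.deg using Nat.strong_induction_on generalizing u v with
  | _ n ih => exact D.multOn_of_le (fun x y h => ih _ h x y rfl) u v hn.le

end FreeRBBialgData

/-- For all `u, v ∈ kX_∞`, `Δ(u ⋄ v) = Δ(u) ⋄ Δ(v)`; that is, `Δ` is a
homomorphism of `k`-algebras from `(kX_∞, ⋄)` to `(kX_∞ ⊗ kX_∞, ⋄ ⊗ ⋄)`. -/
theorem coproduct_is_algebra_hom
    {k : Type v} [CommRing k] {X : Type u} {lam : k} (D : FreeRBBialgData k X lam)
    (u v : RBMod k X) :
    D.Dl (D.d u v) = D.toFreeRBAData.mulT (D.Dl u) (D.Dl v) :=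
  LinearMap.congr_fun₂ (linearMap_ext_sing₂ (F := D.d.compr₂ D.Dl)
    (G := D.mulT.compl₁₂ D.Dl D.Dl) D.multOn) u v
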